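/- Let W be an H-isonormal process on a probability space (Ω,μ), let G be a topological group, and let π : G → B(H) be a strongly continuous orthogonal representation, i.e. each π_s is a linear isometric bijection of H, π_{st} = π_s ∘ π_t, π_e = id, and s ↦ π_s(h) is continuous for every h ∈ H. Then for every h ∈ H and every g ∈ L¹(Ω;ℂ), the map G → ℂ, s ↦ ∫_Ω e^{i W(π_s(h))} g dμ, is continuous. (This is the weak* continuity of s ↦ Γ^∞(π_s) evaluated at the exponentials e^{iW(h)}.) -/

import Mathlib

open MeasureTheory ProbabilityTheory
open scoped ENNReal NNReal RealInnerProductSpace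

/-!
Convergence in `Lᵖ` gives convergence in measure, hence a.e. convergence along a subsequence of
any subsequence; since `|φ ∘ X| ≤ C`, dominated convergence with bound `C ‖g‖` then shows that
`X ↦ ∫ φ(X) g dμ` is continuous on `Lᵖ`. The covariance identity makes `W` an isometry into `L²`,
so the map of the theorem is a composition of continuous maps.
-/

namespace MeasureTheory

open Filter Topology

theorem Lp.continuous_integral_comp_mul {Ω E : Type*} [MeasurableSpace Ω] {μ : Measure Ω}
    [NormedAddCommGroup E] {p : ℝ≥0∞} [Fact (1 ≤ p)] {φ : E → ℂ} (hφ : Continuous φ) {C : ℝ}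
    (hC : ∀ x, ‖φ x‖ ≤ C) {g : Ω → ℂ} (hg : Integrable g μ) :
    Continuous fun X : Lp E p μ => ∫ ω, φ (X ω) * g ω ∂μ := by
  refine continuous_iff_continuousAt.mpr fun Y => tendsto_of_subseq_tendsto fun Xs hXs => ?_
  obtain ⟨ms, -, hae⟩ := (tendstoInMeasure_of_tendsto_Lp hXs).exists_seq_tendsto_ae
  refine ⟨ms, tendsto_integral_of_dominated_convergence (fun ω => C * ‖g ω‖) (fun n => ?_)
    (hg.norm.const_mul C) (fun n => ae_of_all _ fun ω => ?_) ?_⟩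
  · exact (hφ.comp_aestronglyMeasurable (Lp.aestronglyMeasurable _)).mul hg.1
  · rw [norm_mul]
    exact mul_le_mul_of_nonneg_right (hC _) (norm_nonneg _)
  · exact hae.mono fun ω hω => ((hφ.tendsto _).comp hω).mul_const _

theorem L2.integral_mul_self_eq_norm_sq {Ω : Type*} [MeasurableSpace Ω] {μ : Measure Ω}
    (X : Lp ℝ 2 μ) : ∫ ω, X ω * X ω ∂μ = ‖X‖ ^ 2 := by
  rw [← real_inner_self_eq_norm_sq, L2.inner_def]
  simp only [RCLike.inner_apply, conj_trivial]

end MeasureTheory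

theorem statement7_general
    {Ω : Type*} [MeasurableSpace Ω] {μ : Measure Ω}
    {H : Type*} [NormedAddCommGroup H] [InnerProductSpace ℝ H]
    (W : H →ₗ[ℝ] Lp ℝ 2 μ)
    (hCov : ∀ h₁ h₂, ∫ ω, (W h₁ : Ω → ℝ) ω * (W h₂ : Ω → ℝ) ω ∂μ = ⟪h₁, h₂⟫)
    {G : Type*} [TopologicalSpace G]
    (π : G → (H ≃ₗᵢ[ℝ] H))
    (hπ_cont : ∀ h : H, Continuous fun s : G => π s h)
    (h : H) (g : Ω → ℂ) (hg : Integrable g μ) :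
    Continuous fun s : G =>
      ∫ ω, Complex.exp (Complex.I * ((W (π s h) : Ω → ℝ) ω : ℂ)) * g ω ∂μ := by
  have hW_isometry : ∀ x, ‖W x‖ = ‖x‖ := fun x => by
    have hsq : ‖W x‖ ^ 2 = ‖x‖ ^ 2 := by
      rw [← L2.integral_mul_self_eq_norm_sq, hCov, real_inner_self_eq_norm_sq]
    exact (pow_left_inj₀ (norm_nonneg _) (norm_nonneg _) two_ne_zero).mp hsq
  have hW_cont : Continuous W := (⟨W, hW_isometry⟩ : H →ₗᵢ[ℝ] Lp ℝ 2 μ).continuous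
  have hexp : Continuous fun x : ℝ => Complex.exp (Complex.I * x) := by fun_prop
  exact (Lp.continuous_integral_comp_mul hexp
    (fun x => (Complex.norm_exp_I_mul_ofReal x).le) hg).comp (hW_cont.comp (hπ_cont h))

/-- Let `W` be an `H`-isonormal process on a probability space `(Ω, μ)`,
`G` a topological group and `π : G → B(H)` a strongly continuous orthogonal representation
(each `π s` is a surjective linear isometry, `π (s t) = π s ∘ π t`, `π 1 = id`, and
`s ↦ π s h` is continuous for each `h`).  Then for every `h ∈ H` and every `g ∈ L¹(Ω; ℂ)`
the map `s ↦ ∫_Ω e^{i W(π s h)} g dμ` is continuous on `G`. -/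
theorem statement7
    {Ω : Type*} [MeasurableSpace Ω] {μ : Measure Ω} [IsProbabilityMeasure μ]
    {H : Type*} [NormedAddCommGroup H] [InnerProductSpace ℝ H]
    (W : H →ₗ[ℝ] Lp ℝ 2 μ)
    (hLaw : ∀ h, Measure.map (W h : Ω → ℝ) μ = gaussianReal 0 (‖h‖₊ ^ 2))
    (hCov : ∀ h₁ h₂, ∫ ω, (W h₁ : Ω → ℝ) ω * (W h₂ : Ω → ℝ) ω ∂μ = ⟪h₁, h₂⟫)
    {G : Type*} [Group G] [TopologicalSpace G] [IsTopologicalGroup G]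
    (π : G → (H ≃ₗᵢ[ℝ] H))
    (hπ_mul : ∀ s t : G, ∀ h : H, π (s * t) h = π s (π t h))
    (hπ_one : ∀ h : H, π 1 h = h)
    (hπ_cont : ∀ h : H, Continuous fun s : G => π s h)
    (h : H) (g : Ω → ℂ) (hg : Integrable g μ) :
    Continuous fun s : G =>
      ∫ ω, Complex.exp (Complex.I * ((W (π s h) : Ω → ℝ) ω : ℂ)) * g ω ∂μ :=
  statement7_general W hCov π hπ_cont h g hg
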